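/- Let ℓ ∈ ℝ_{>0}^r be generic with r = 2k+1, and let c ≥ 0 with l(J) ≠ ±c for all J. Define L = {J ⊆ {1,...,r} : l(J) > c}, S = {I : l(I) < −c}, and L' = {J ∈ L : ∃ j ∈ J, l(J \ {j}) < −c}. Suppose L' is nonempty and every J ∈ L' contains at least k+1 elements j with l(J \ {j}) < −c. Then L = {J : |J| ≥ k+1} and c < min{l(K) : l(K) > 0}. -/

import Mathlib

/-- `l(J) = ∑_{j ∈ J} l_j − ∑_{j ∉ J} l_j`. -/
noncomputable def lval {r : ℕ} (l : Fin r → ℝ) (J : Finset (Fin r)) : ℝ :=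
  ∑ j ∈ J, l j - ∑ j ∈ Jᶜ, l j

open Finset

/-! Call `J` critical if `l(J) > c` and `l(J \ {j}) < -c` for some
`j ∈ J`. Then `A = (J \ {j})ᶜ` is critical as well, witnessed by the same `j`, since
`A \ {j} = Jᶜ`. As both `J` and `A` have at least `k + 1` elements and `|J| + |A| = 2k + 2`,
every critical set has exactly `k + 1` elements, all of whose `k`-subsets are short. Exchanging
one element of a critical `J` for an element `a ∉ J` gives `(A \ {a})ᶜ`, which is critical again;
so, starting from the critical set provided by the hypothesis, every `(k + 1)`-set is critical.
Monotonicity of `l` and `l(Jᶜ) = -l(J)` then settle all other sets. -/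

theorem of_card_eq_of_exchange {α : Type*} [DecidableEq α] {p : Finset α → Prop}
    (hp : ∀ J, p J → ∀ j ∈ J, ∀ a ∉ J, p (insert a (J.erase j)))
    {J K : Finset α} (hJ : p J) (hK : #K = #J) : p K := by
  induction h : #(K \ J) generalizing J with
  | zero =>
    have hKJ : K ⊆ J := by simpa using h
    rwa [eq_of_subset_of_card_le hKJ hK.ge]
  | succ n ih =>
    obtain ⟨a, ha⟩ : (K \ J).Nonempty := card_pos.mp (by omega)
    obtain ⟨j, hj⟩ : (J \ K).Nonempty := card_pos.mp (by rw [card_sdiff_comm hK.symm]; omega)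
    rw [mem_sdiff] at ha hj
    have haj : a ∉ J.erase j := fun h => ha.2 (mem_of_mem_erase h)
    refine ih (hp J hJ j hj.1 a ha.2) ?_ ?_
    · rw [card_insert_of_notMem haj, card_erase_of_mem hj.1, hK]
      have := card_pos.mpr ⟨j, hj.1⟩
      omega
    · have : K \ insert a (J.erase j) = (K \ J).erase a := by
        ext x; simp only [mem_sdiff, mem_insert, mem_erase]; grind
      rw [this, card_erase_of_mem (mem_sdiff.mpr ha), h]
      rfl

section lval

variable {r : ℕ} {l : Fin r → ℝ}

theorem lval_compl (J : Finset (Fin r)) : lval l Jᶜ = -lval l J := by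
  rw [lval, lval, compl_compl]
  ring

theorem lval_mono (hl : ∀ j, 0 ≤ l j) {J K : Finset (Fin r)} (h : J ⊆ K) :
    lval l J ≤ lval l K := by
  have hJK := sum_le_sum_of_subset_of_nonneg h fun i _ _ => hl i
  have hKJ := sum_le_sum_of_subset_of_nonneg (compl_subset_compl.mpr h) fun i _ _ => hl i
  rw [lval, lval]
  linarith

/-- The paper's `L'`. -/
def IsCritical (l : Fin r → ℝ) (c : ℝ) (J : Finset (Fin r)) : Prop :=
  c < lval l J ∧ ∃ j ∈ J, lval l (J.erase j) < -c

theorem IsCritical.compl_erase {c : ℝ} {J : Finset (Fin r)} (hJ : c < lval l J) {j : Fin r}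
    (hj : j ∈ J) (hjJ : lval l (J.erase j) < -c) : IsCritical l c (J.erase j)ᶜ := by
  refine ⟨by rw [lval_compl]; linarith, j, by simp, ?_⟩
  rw [Finset.compl_erase, erase_insert (by simpa using hj), lval_compl]
  linarith

end lval

section critical

variable {k : ℕ} {l : Fin (2 * k + 1) → ℝ} {c : ℝ}
  (hmany : ∀ J, IsCritical l c J → k + 1 ≤ #(J.filter fun j => lval l (J.erase j) < -c))
include hmany

theorem IsCritical.card_eq {J : Finset (Fin (2 * k + 1))} (hJ : IsCritical l c J) :
    #J = k + 1 := by
  obtain ⟨hJc, j, hj, hjJ⟩ := hJ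
  have hJ := (hmany J ⟨hJc, j, hj, hjJ⟩).trans (card_filter_le _ _)
  have hA := (hmany _ (IsCritical.compl_erase hJc hj hjJ)).trans (card_filter_le _ _)
  rw [card_compl, Fintype.card_fin, card_erase_of_mem hj] at hA
  omega

theorem IsCritical.lval_erase_lt {J : Finset (Fin (2 * k + 1))} (hJ : IsCritical l c J)
    {j : Fin (2 * k + 1)} (hj : j ∈ J) : lval l (J.erase j) < -c := by
  have hfilter : J.filter (fun j => lval l (J.erase j) < -c) = J :=
    eq_of_subset_of_card_le (filter_subset _ _) ((hJ.card_eq hmany).trans_le (hmany J hJ))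
  rw [← hfilter, mem_filter] at hj
  exact hj.2

theorem IsCritical.exchange {J : Finset (Fin (2 * k + 1))} (hJ : IsCritical l c J)
    {j a : Fin (2 * k + 1)} (hj : j ∈ J) (ha : a ∉ J) : IsCritical l c (insert a (J.erase j)) := by
  have hjJ := hJ.lval_erase_lt hmany hj
  have haJ : a ∉ J.erase j := fun h => ha (mem_of_mem_erase h)
  have hA := IsCritical.compl_erase hJ.1 hj hjJ
  have haA := hA.lval_erase_lt hmany (mem_compl.mpr haJ)
  have hcompl : ((J.erase j)ᶜ.erase a)ᶜ = insert a (J.erase j) := by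
    rw [Finset.compl_erase, compl_compl]
  refine ⟨by rw [← hcompl, lval_compl]; linarith, a, mem_insert_self _ _, ?_⟩
  rwa [erase_insert haJ]

end critical

theorem maximal_syzygy_combinatorics_general (k : ℕ) (l : Fin (2 * k + 1) → ℝ)
    (hl : ∀ j, 0 < l j)
    (c : ℝ) (hc : 0 ≤ c)
    (hne : ∃ J : Finset (Fin (2 * k + 1)),
      c < lval l J ∧ ∃ j ∈ J, lval l (J.erase j) < -c)
    (hmany : ∀ J : Finset (Fin (2 * k + 1)),
      c < lval l J → (∃ j ∈ J, lval l (J.erase j) < -c) →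
        k + 1 ≤ (J.filter fun j => lval l (J.erase j) < -c).card) :
    (∀ J : Finset (Fin (2 * k + 1)), c < lval l J ↔ k + 1 ≤ J.card) ∧
      ∀ K : Finset (Fin (2 * k + 1)), 0 < lval l K → c < lval l K := by
  replace hmany : ∀ J, IsCritical l c J → _ := fun J hJ => hmany J hJ.1 hJ.2
  obtain ⟨J₀, hJ₀⟩ : ∃ J, IsCritical l c J := hne
  have hlong : ∀ J : Finset (Fin (2 * k + 1)), k + 1 ≤ #J → c < lval l J := by
    intro J hJ
    obtain ⟨K, hKJ, hK⟩ := exists_subset_card_eq hJ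
    have hKcrit := of_card_eq_of_exchange (p := IsCritical l c)
      (fun _ h _ hj _ ha => h.exchange hmany hj ha) hJ₀
      (hK.trans (hJ₀.card_eq hmany).symm)
    exact hKcrit.1.trans_le (lval_mono (fun j => (hl j).le) hKJ)
  have hshort : ∀ J : Finset (Fin (2 * k + 1)), #J ≤ k → lval l J < -c := by
    intro J hJ
    have := hlong Jᶜ (by rw [card_compl, Fintype.card_fin]; omega)
    rw [lval_compl] at this
    linarith
  refine ⟨fun J => ⟨fun hJ => ?_, hlong J⟩, fun K hK => ?_⟩
  · by_contra h
    linarith [hshort J (by omega)]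
  · by_cases h : k + 1 ≤ #K
    · exact hlong K h
    · linarith [hshort K (by omega)]

/-- Let `ℓ ∈ ℝ_{>0}^r` be generic with `r = 2k+1`, and let
`c ≥ 0` with `l(J) ≠ ±c` for all `J`. Put `L' = {J : l(J) > c and some
j ∈ J has l(J \ {j}) < −c}`. If `L'` is nonempty and every `J ∈ L'` has at
least `k+1` elements `j` with `l(J \ {j}) < −c`, then
`{J : l(J) > c} = {J : |J| ≥ k+1}` and `c < min {l(K) : l(K) > 0}`. -/
theorem maximal_syzygy_combinatorics (k : ℕ) (l : Fin (2 * k + 1) → ℝ)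
    (hl : ∀ j, 0 < l j) (hgen : ∀ J : Finset (Fin (2 * k + 1)), lval l J ≠ 0)
    (c : ℝ) (hc : 0 ≤ c)
    (hreg : ∀ J : Finset (Fin (2 * k + 1)), lval l J ≠ c ∧ lval l J ≠ -c)
    (hne : ∃ J : Finset (Fin (2 * k + 1)),
      c < lval l J ∧ ∃ j ∈ J, lval l (J.erase j) < -c)
    (hmany : ∀ J : Finset (Fin (2 * k + 1)),
      c < lval l J → (∃ j ∈ J, lval l (J.erase j) < -c) →
        k + 1 ≤ (J.filter fun j => lval l (J.erase j) < -c).card) :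
    (∀ J : Finset (Fin (2 * k + 1)), c < lval l J ↔ k + 1 ≤ J.card) ∧
      ∀ K : Finset (Fin (2 * k + 1)), 0 < lval l K → c < lval l K :=
  maximal_syzygy_combinatorics_general k l hl c hc hne hmany
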